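/- Suppose G' and G are finite simple graphs on the same vertex set such that E(G') ⊆ E(G), and deg_G(v) ≤ 3·deg_{G'}(v) for every vertex v. Then for every nonempty vertex subset S, den_{G'}(S) ≤ den_G(S) ≤ den_{G'}(S) + (3/|S|)·Σ_{x∈S} deg_{G'}(x). -/

import Mathlib

open Finset

open scoped Classical in
/-- `E_G(S)`: edges of `G` with both endpoints in `S`. -/
noncomputable def edgesIn {V : Type*} [Fintype V] [DecidableEq V]
    (G : SimpleGraph V) [DecidableRel G.Adj] (S : Finset V) : Finset (Sym2 V) :=
  G.edgeFinset.filter (fun e => ∀ v ∈ e, v ∈ S)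

/-- `den_G(S) = |E_G(S)|/|S|`. -/
noncomputable def den {V : Type*} [Fintype V] [DecidableEq V]
    (G : SimpleGraph V) [DecidableRel G.Adj] (S : Finset V) : ℝ :=
  (edgesIn G S).card / S.card

/-! The first inequality is monotonicity of `E(S)` in the graph. For the second, every edge of
`E_G(S)` is incident to some vertex of `S`, so `|E_G(S)| ≤ Σ_{x ∈ S} deg_G x ≤ 3 Σ_{x ∈ S} deg_{G'} x`,
and `den_{G'}(S) ≥ 0` absorbs the remaining term. -/

section

variable {V : Type*} [Fintype V] [DecidableEq V] (S : Finset V)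

theorem edgesIn_mono {G' G : SimpleGraph V} [DecidableRel G'.Adj] [DecidableRel G.Adj]
    (h : G' ≤ G) : edgesIn G' S ⊆ edgesIn G S := by
  unfold edgesIn
  exact filter_subset_filter _ (SimpleGraph.edgeFinset_mono h)

theorem den_mono {G' G : SimpleGraph V} [DecidableRel G'.Adj] [DecidableRel G.Adj]
    (h : G' ≤ G) : den G' S ≤ den G S := by
  unfold den
  gcongr
  exact edgesIn_mono S h

variable (G : SimpleGraph V) [DecidableRel G.Adj]

theorem den_nonneg : 0 ≤ den G S := by
  unfold den
  positivity

theorem edgesIn_subset_biUnion_incidenceFinset :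
    edgesIn G S ⊆ S.biUnion (fun x => G.incidenceFinset x) := by
  intro e he
  simp only [edgesIn, mem_filter, SimpleGraph.mem_edgeFinset] at he
  induction e using Sym2.ind with
  | _ a b =>
    exact mem_biUnion.2
      ⟨a, he.2 a (Sym2.mem_mk_left a b), (G.mem_incidenceFinset _ _).2 ⟨he.1, Sym2.mem_mk_left a b⟩⟩

theorem card_edgesIn_le_sum_degree : (edgesIn G S).card ≤ ∑ x ∈ S, G.degree x :=
  calc (edgesIn G S).card ≤ (S.biUnion (fun x => G.incidenceFinset x)).card :=
        card_le_card (edgesIn_subset_biUnion_incidenceFinset S G)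
    _ ≤ ∑ x ∈ S, (G.incidenceFinset x).card := card_biUnion_le
    _ = ∑ x ∈ S, G.degree x := by simp only [SimpleGraph.card_incidenceFinset_eq_degree]

theorem den_le_sum_degree_div : den G S ≤ (∑ x ∈ S, (G.degree x : ℝ)) / S.card := by
  unfold den
  gcongr
  exact_mod_cast card_edgesIn_le_sum_degree S G

end

theorem forgiving_graph_density_bounds_general {V : Type*} [Fintype V] [DecidableEq V]
    (G' G : SimpleGraph V) [DecidableRel G'.Adj] [DecidableRel G.Adj]
    (hsub : ∀ u v : V, G'.Adj u v → G.Adj u v)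
    (hdeg : ∀ v : V, G.degree v ≤ 3 * G'.degree v)
    (S : Finset V) :
    den G' S ≤ den G S ∧
      den G S ≤ den G' S + (3 / (S.card : ℝ)) * (∑ x ∈ S, (G'.degree x : ℝ)) := by
  refine ⟨den_mono S fun u v => hsub u v, ?_⟩
  have hsum : ∑ x ∈ S, (G.degree x : ℝ) ≤ 3 * ∑ x ∈ S, (G'.degree x : ℝ) := by
    rw [mul_sum]
    exact sum_le_sum fun x _ => by exact_mod_cast hdeg x
  calc den G S ≤ (∑ x ∈ S, (G.degree x : ℝ)) / S.card := den_le_sum_degree_div S G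
    _ ≤ (3 * ∑ x ∈ S, (G'.degree x : ℝ)) / S.card := by gcongr
    _ = (3 / (S.card : ℝ)) * (∑ x ∈ S, (G'.degree x : ℝ)) := by ring
    _ ≤ den G' S + (3 / (S.card : ℝ)) * (∑ x ∈ S, (G'.degree x : ℝ)) :=
        le_add_of_nonneg_left (den_nonneg S G')

theorem forgiving_graph_density_bounds {V : Type*} [Fintype V] [DecidableEq V]
    (G' G : SimpleGraph V) [DecidableRel G'.Adj] [DecidableRel G.Adj]
    (hsub : ∀ u v : V, G'.Adj u v → G.Adj u v)
    (hdeg : ∀ v : V, G.degree v ≤ 3 * G'.degree v)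
    (S : Finset V) (hS : S.Nonempty) :
    den G' S ≤ den G S ∧
      den G S ≤ den G' S + (3 / (S.card : ℝ)) * (∑ x ∈ S, (G'.degree x : ℝ)) :=
  forgiving_graph_density_bounds_general G' G hsub hdeg S
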